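/- Let Z ∈ ℝ^{n×T} have rows summing to zero, F its row-wise discrete Fourier transform, and K^{1/2} the complex square root of the flip permutation matrix defined via its eigendecomposition (with i on the antisymmetric eigenvectors). Then every entry of the matrix F·K^{1/2} is real, and [F K^{1/2}]_{i,k} = Re(F_{i,k}) − Im(F_{i,k}) for all i ∈ {1,…,n} and k ∈ {1,…,T}. -/
import Mathlib


open Matrix

/-- The index map `a ↦ T - a` (0-indexed version of `ℓ ↦ T - ℓ + 2`),
fixing `0`. -/
def flipIdx {T : ℕ} (hT : 0 < T) (a : Fin T) : Fin T :=
  ⟨(T - a.val) % T, Nat.mod_lt _ hT⟩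

/-- The standard basis vector `e_j` of `ℂ^T`. -/
def ebC {T : ℕ} (j : Fin T) : Fin T → ℂ := Pi.single j 1

lemma flip_val {T : ℕ} (h : 0 < T) (a : Fin T) (ha : 1 ≤ a.val) :
    (flipIdx h a).val = T - a.val := by
  simp only [flipIdx]
  exact Nat.mod_eq_of_lt (by omega)

lemma dot_single {T : ℕ} (f : Fin T → ℂ) (a : Fin T) :
    ∑ j, f j * ebC a j = f a := by
  simp [ebC, Pi.single_apply, mul_ite, Finset.sum_ite_eq']

lemma sq_sum_add {T : ℕ} (a b : Fin T) (hab : a ≠ b) :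
    ∑ i, ((ebC a + ebC b) i) ^ 2 = (2 : ℂ) := by
  have : ∀ i : Fin T, ((ebC a + ebC b) i) ^ 2
      = (if i = a then 1 else 0) + (if i = b then 1 else 0) := by
    intro i
    simp only [Pi.add_apply, ebC, Pi.single_apply]
    split_ifs with h1 h2 <;> simp_all <;> ring
  rw [Finset.sum_congr rfl fun i _ => this i]
  simp [Finset.sum_add_distrib]
  norm_num

lemma sq_sum_sub {T : ℕ} (a b : Fin T) (hab : a ≠ b) :
    ∑ i, ((ebC a - ebC b) i) ^ 2 = (2 : ℂ) := by
  have : ∀ i : Fin T, ((ebC a - ebC b) i) ^ 2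
      = (if i = a then 1 else 0) + (if i = b then 1 else 0) := by
    intro i
    simp only [Pi.sub_apply, ebC, Pi.single_apply]
    split_ifs with h1 h2 <;> simp_all <;> ring
  rw [Finset.sum_congr rfl fun i _ => this i]
  simp [Finset.sum_add_distrib]
  norm_num

lemma alg (z : ℂ) :
    (2:ℂ)⁻¹ * ((z + (starRingEnd ℂ) z) * 1) + (Complex.I * 2⁻¹) * ((z - (starRingEnd ℂ) z) * 1)
      = ((z.re - z.im : ℝ) : ℂ) := by
  apply Complex.ext <;>
    simp [Complex.add_re, Complex.add_im, Complex.mul_re, Complex.mul_im] <;> ring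

lemma conj_sym {n T : ℕ} (hT0 : 0 < T)
    (Z : Matrix (Fin n) (Fin T) ℝ)
    (F : Matrix (Fin n) (Fin T) ℂ)
    (hF : ∀ i k, F i k = ∑ t : Fin T,
      (Z i t : ℂ) *
        Complex.exp (-2 * Real.pi * Complex.I * (k.val : ℂ) * (t.val : ℂ) / T))
    (i : Fin n) (k : Fin T) (hk : 1 ≤ k.val) :
    F i (flipIdx hT0 k) = (starRingEnd ℂ) (F i k) := by
  rw [hF, hF, map_sum]
  apply Finset.sum_congr rfl
  intro t _
  rw [_root_.map_mul, Complex.conj_ofReal]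
  congr 1
  rw [← Complex.exp_conj]
  have hv : (((flipIdx hT0 k).val : ℕ) : ℂ) = (T : ℂ) - (k.val : ℂ) := by
    rw [flip_val hT0 k hk]
    push_cast [Nat.cast_sub k.isLt.le]
    ring
  rw [hv]
  have hTne : (T : ℂ) ≠ 0 := by
    exact_mod_cast Nat.cast_ne_zero.mpr (by omega)
  have hconj : (starRingEnd ℂ) (-2 * (Real.pi : ℂ) * Complex.I * (k.val : ℂ) * (t.val : ℂ) / T)
      = 2 * (Real.pi : ℂ) * Complex.I * (k.val : ℂ) * (t.val : ℂ) / T := by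
    simp only [map_div₀, _root_.map_mul, map_neg, map_ofNat, Complex.conj_I,
      Complex.conj_ofReal, Complex.conj_natCast]
    ring
  rw [hconj]
  have hsplit : -2 * (Real.pi : ℂ) * Complex.I * ((T : ℂ) - (k.val : ℂ)) * (t.val : ℂ) / T
      = 2 * (Real.pi : ℂ) * Complex.I * (k.val : ℂ) * (t.val : ℂ) / T
        + ((-(t.val : ℤ) : ℤ) : ℂ) * (2 * (Real.pi : ℂ) * Complex.I) := by
    push_cast
    field_simp
    ring
  rw [hsplit, Complex.exp_add, Complex.exp_int_mul_two_pi_mul_I, mul_one]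

lemma alg2 (z : ℂ) :
    (2:ℂ)⁻¹ * (((starRingEnd ℂ) z + z) * 1)
        + (Complex.I * 2⁻¹) * (((starRingEnd ℂ) z - z) * (-1))
      = ((z.re - z.im : ℝ) : ℂ) := by
  apply Complex.ext <;>
    simp [Complex.add_re, Complex.add_im, Complex.mul_re, Complex.mul_im] <;> ring

lemma dot_pair_add {T : ℕ} (f : Fin T → ℂ) (a b : Fin T) :
    ∑ j, f j * (ebC a + ebC b) j = f a + f b := by
  simp only [Pi.add_apply, mul_add, Finset.sum_add_distrib, dot_single]

lemma dot_pair_sub {T : ℕ} (f : Fin T → ℂ) (a b : Fin T) :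
    ∑ j, f j * (ebC a - ebC b) j = f a - f b := by
  simp only [Pi.sub_apply, mul_sub, Finset.sum_sub_distrib, dot_single]

lemma sum_mul_term {T : ℕ} (f : Fin T → ℂ) (c : ℂ) (u : Fin T → ℂ) (k : Fin T) :
    ∑ j, f j * (c * (u j * u k)) = c * ((∑ j, f j * u j) * u k) := by
  calc ∑ j, f j * (c * (u j * u k)) = ∑ j, (f j * u j) * (c * u k) := by
        exact Finset.sum_congr rfl fun j _ => by ring
    _ = (∑ j, f j * u j) * (c * u k) := (Finset.sum_mul ..).symm
    _ = c * ((∑ j, f j * u j) * u k) := by ring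

/-- For `Z ∈ ℝ^{n×T}` with rows summing to zero, `F` its row-wise DFT and
`K^{1/2}` the complex square root of the flip permutation matrix defined via
its eigendecomposition (with `i` on the antisymmetric eigenvectors), every
entry of `F K^{1/2}` is real, with
`[F K^{1/2}]_{i,k} = Re(F_{i,k}) - Im(F_{i,k})`. -/
theorem stmt10 (n T : ℕ) (hT : 2 ≤ T)
    (Z : Matrix (Fin n) (Fin T) ℝ)
    (hZ : ∀ i, ∑ t, Z i t = 0)
    (F : Matrix (Fin n) (Fin T) ℂ)
    (hF : ∀ i k, F i k = ∑ t : Fin T,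
      (Z i t : ℂ) *
        Complex.exp (-2 * Real.pi * Complex.I * (k.val : ℂ) * (t.val : ℂ) / T))
    (Ksqrt : Matrix (Fin T) (Fin T) ℂ)
    (hKsqrt : Ksqrt =
      vecMulVec (ebC (⟨0, by omega⟩ : Fin T)) (ebC (⟨0, by omega⟩ : Fin T)) +
      ∑ a ∈ Finset.univ.filter (fun a : Fin T => 1 ≤ a.val ∧ a.val ≤ T - a.val),
        ((∑ i, (ebC a + ebC (flipIdx (by omega) a)) i ^ 2)⁻¹ •
            vecMulVec (ebC a + ebC (flipIdx (by omega) a))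
              (ebC a + ebC (flipIdx (by omega) a))
          + (Complex.I * (∑ i, (ebC a - ebC (flipIdx (by omega) a)) i ^ 2)⁻¹) •
            vecMulVec (ebC a - ebC (flipIdx (by omega) a))
              (ebC a - ebC (flipIdx (by omega) a)))) :
    ∀ (i : Fin n) (k : Fin T),
      ((F * Ksqrt) i k).im = 0 ∧
        (F * Ksqrt) i k = (((F i k).re - (F i k).im : ℝ) : ℂ) := by
  have hT0 : 0 < T := by omega
  intro i k
  have hF0 : F i ⟨0, hT0⟩ = 0 := by
    rw [hF]
    have h1 : ∀ t : Fin T, (Z i t : ℂ) *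
        Complex.exp (-2 * Real.pi * Complex.I * (((⟨0, hT0⟩ : Fin T)).val : ℂ) * (t.val : ℂ) / T)
        = (Z i t : ℂ) := by
      intro t
      norm_num
    rw [Finset.sum_congr rfl fun t _ => h1 t]
    calc ∑ t, ((Z i t : ℝ) : ℂ) = ((∑ t, Z i t : ℝ) : ℂ) := by push_cast; rfl
      _ = 0 := by rw [hZ i]; simp
  have key : (F * Ksqrt) i k
      = F i ⟨0, hT0⟩ * ebC (⟨0, hT0⟩ : Fin T) k
        + ∑ a ∈ Finset.univ.filter (fun a : Fin T => 1 ≤ a.val ∧ a.val ≤ T - a.val),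
          ((∑ x, ((ebC a + ebC (flipIdx hT0 a)) x) ^ 2)⁻¹ *
              ((F i a + F i (flipIdx hT0 a)) * (ebC a + ebC (flipIdx hT0 a)) k)
            + (Complex.I * (∑ x, ((ebC a - ebC (flipIdx hT0 a)) x) ^ 2)⁻¹) *
              ((F i a - F i (flipIdx hT0 a)) * (ebC a - ebC (flipIdx hT0 a)) k)) := by
    rw [Matrix.mul_apply, hKsqrt]
    simp only [Matrix.add_apply, Matrix.sum_apply, Matrix.smul_apply, vecMulVec_apply,
      smul_eq_mul, mul_add, Finset.mul_sum]
    rw [Finset.sum_add_distrib, Finset.sum_comm]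
    congr 1
    · calc ∑ j, F i j * (ebC (⟨0, hT0⟩ : Fin T) j * ebC (⟨0, hT0⟩ : Fin T) k)
          = (∑ j, F i j * ebC (⟨0, hT0⟩ : Fin T) j) * ebC (⟨0, hT0⟩ : Fin T) k := by
            rw [Finset.sum_mul]
            exact Finset.sum_congr rfl fun j _ => by ring
        _ = F i ⟨0, hT0⟩ * ebC (⟨0, hT0⟩ : Fin T) k := by rw [dot_single]
    · apply Finset.sum_congr rfl
      intro a _
      rw [Finset.sum_add_distrib, sum_mul_term, sum_mul_term, dot_pair_add, dot_pair_sub]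
  have hmain : (F * Ksqrt) i k = (((F i k).re - (F i k).im : ℝ) : ℂ) := by
    rw [key, hF0, zero_mul, zero_add]
    rcases Nat.eq_zero_or_pos k.val with hk0 | hk1
    · -- k = 0
      have hkeq : k = ⟨0, hT0⟩ := Fin.ext hk0
      have hz : ∀ a ∈ Finset.univ.filter (fun a : Fin T => 1 ≤ a.val ∧ a.val ≤ T - a.val),
          ((∑ x, ((ebC a + ebC (flipIdx hT0 a)) x) ^ 2)⁻¹ *
              ((F i a + F i (flipIdx hT0 a)) * (ebC a + ebC (flipIdx hT0 a)) k)
            + (Complex.I * (∑ x, ((ebC a - ebC (flipIdx hT0 a)) x) ^ 2)⁻¹) *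
              ((F i a - F i (flipIdx hT0 a)) * (ebC a - ebC (flipIdx hT0 a)) k)) = 0 := by
        intro a ha
        rw [Finset.mem_filter] at ha
        obtain ⟨-, h1, h2⟩ := ha
        have h3 : (flipIdx hT0 a).val = T - a.val := flip_val hT0 a h1
        have hne1 : k ≠ a := fun h => by omega
        have hne2 : k ≠ flipIdx hT0 a := fun h => by
          have := congrArg Fin.val h; omega
        simp [ebC, Pi.single_eq_of_ne hne1, Pi.single_eq_of_ne hne2]
      rw [Finset.sum_eq_zero hz, hkeq, hF0]
      simp
    · have hb : (flipIdx hT0 k).val = T - k.val := flip_val hT0 k hk1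
      have hz2 : ∀ a ∈ Finset.univ.filter (fun a : Fin T => 1 ≤ a.val ∧ a.val ≤ T - a.val),
          a.val ≠ k.val → T - a.val ≠ k.val →
          ((∑ x, ((ebC a + ebC (flipIdx hT0 a)) x) ^ 2)⁻¹ *
              ((F i a + F i (flipIdx hT0 a)) * (ebC a + ebC (flipIdx hT0 a)) k)
            + (Complex.I * (∑ x, ((ebC a - ebC (flipIdx hT0 a)) x) ^ 2)⁻¹) *
              ((F i a - F i (flipIdx hT0 a)) * (ebC a - ebC (flipIdx hT0 a)) k)) = 0 := by
        intro a ha hv1 hv2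
        rw [Finset.mem_filter] at ha
        obtain ⟨-, h1, h2⟩ := ha
        have h3 : (flipIdx hT0 a).val = T - a.val := flip_val hT0 a h1
        have hne1 : k ≠ a := fun h => hv1 (congrArg Fin.val h).symm
        have hne2 : k ≠ flipIdx hT0 a := fun h => by
          have := congrArg Fin.val h; omega
        simp [ebC, Pi.single_eq_of_ne hne1, Pi.single_eq_of_ne hne2]
      have hkT : k.val < T := k.isLt
      rcases lt_trichotomy k.val (T - k.val) with hlt | heq | hgt
      · -- k strictly below the midpoint
        have hkb : k ≠ flipIdx hT0 k := fun h => by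
          have := congrArg Fin.val h; omega
        have hmem : k ∈ Finset.univ.filter
            (fun a : Fin T => 1 ≤ a.val ∧ a.val ≤ T - a.val) :=
          Finset.mem_filter.mpr ⟨Finset.mem_univ _, hk1, by omega⟩
        rw [Finset.sum_eq_single_of_mem k hmem (fun a ha hne => hz2 a ha
          (fun h => hne (Fin.ext h)) (by
            rw [Finset.mem_filter] at ha
            obtain ⟨-, h1, h2⟩ := ha
            intro h
            exact hne (Fin.ext (by omega))))]
        rw [sq_sum_add k (flipIdx hT0 k) hkb, sq_sum_sub k (flipIdx hT0 k) hkb,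
          conj_sym hT0 Z F hF i k hk1]
        have hu : (ebC k + ebC (flipIdx hT0 k)) k = 1 := by
          simp [ebC, Pi.single_eq_same, Pi.single_eq_of_ne hkb]
        have hw : (ebC k - ebC (flipIdx hT0 k)) k = 1 := by
          simp [ebC, Pi.single_eq_same, Pi.single_eq_of_ne hkb]
        rw [hu, hw]
        exact alg (F i k)
      · -- k is the midpoint : flip k = k
        have hfix : flipIdx hT0 k = k := Fin.ext (by omega)
        have hmem : k ∈ Finset.univ.filter
            (fun a : Fin T => 1 ≤ a.val ∧ a.val ≤ T - a.val) :=
          Finset.mem_filter.mpr ⟨Finset.mem_univ _, hk1, by omega⟩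
        rw [Finset.sum_eq_single_of_mem k hmem (fun a ha hne => hz2 a ha
          (fun h => hne (Fin.ext h)) (by
            rw [Finset.mem_filter] at ha
            obtain ⟨-, h1, h2⟩ := ha
            intro h
            exact hne (Fin.ext (by omega))))]
        rw [hfix]
        have h4 : ∑ x, ((ebC k + ebC k) x) ^ 2 = (4 : ℂ) := by
          have hpt : ∀ x : Fin T, ((ebC k + ebC k) x) ^ 2 = if x = k then 4 else 0 := by
            intro x
            simp only [Pi.add_apply, ebC, Pi.single_apply]
            split_ifs <;> norm_num
          rw [Finset.sum_congr rfl fun x _ => hpt x]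
          simp
        have hval : (ebC k + ebC k) k = 2 := by
          simp [ebC, Pi.single_eq_same]
          norm_num
        have hcs := conj_sym hT0 Z F hF i k hk1
        rw [hfix] at hcs
        have him : (F i k).im = 0 := Complex.conj_eq_iff_im.mp hcs.symm
        rw [h4, hval]
        have hz0 : ((F i k - F i k) * (ebC k - ebC k) k) = 0 := by simp
        rw [hz0, mul_zero, add_zero]
        have hrw : (4:ℂ)⁻¹ * ((F i k + F i k) * 2) = F i k := by ring
        rw [hrw, him, sub_zero]
        exact (Complex.conj_eq_iff_re.mp hcs.symm).symm
      · -- k strictly above the midpoint : use a₀ = flip k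
        have h1b : 1 ≤ (flipIdx hT0 k).val := by omega
        have hne : flipIdx hT0 k ≠ k := fun h => by
          have := congrArg Fin.val h; omega
        have hfb : flipIdx hT0 (flipIdx hT0 k) = k :=
          Fin.ext (by rw [flip_val hT0 _ h1b, hb]; omega)
        have hmem : flipIdx hT0 k ∈ Finset.univ.filter
            (fun a : Fin T => 1 ≤ a.val ∧ a.val ≤ T - a.val) :=
          Finset.mem_filter.mpr ⟨Finset.mem_univ _, h1b, by omega⟩
        rw [Finset.sum_eq_single_of_mem (flipIdx hT0 k) hmem (fun a ha hne' => hz2 a ha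
          (by
            rw [Finset.mem_filter] at ha
            obtain ⟨-, h1, h2⟩ := ha
            omega) (by
            rw [Finset.mem_filter] at ha
            obtain ⟨-, h1, h2⟩ := ha
            intro h
            exact hne' (Fin.ext (by omega))))]
        rw [hfb, sq_sum_add _ k hne, sq_sum_sub _ k hne, conj_sym hT0 Z F hF i k hk1]
        have hu : (ebC (flipIdx hT0 k) + ebC k) k = 1 := by
          simp [ebC, Pi.single_eq_same, Pi.single_eq_of_ne (Ne.symm hne)]
        have hw : (ebC (flipIdx hT0 k) - ebC k) k = -1 := by
          simp [ebC, Pi.single_eq_same, Pi.single_eq_of_ne (Ne.symm hne)]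
        rw [hu, hw]
        exact alg2 (F i k)
  exact ⟨by rw [hmain]; simp, hmain⟩
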